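/- For every φ ∈ ℝ with cos(φ/2) ≠ 0, the real 2×2 matrices V₀ = [[sin(φ/2), |cos(φ/2)|], [−cos(φ/2), sin φ/(2·|cos(φ/2)|)]] and V₁ = [[|cos(φ/2)|, sin(φ/2)], [sin φ/(2·|cos(φ/2)|), −cos(φ/2)]] are both unitary (viewed as complex matrices). -/

import Mathlib

/-! Since `sin φ = 2 sin(φ/2) cos(φ/2)`, the entry `sin φ / (2 |cos(φ/2)|)` equals
`± sin(φ/2)`, the sign being that of `cos(φ/2)`. Both matrices are therefore real with
orthonormal rows, hence unitary. -/

open scoped Matrix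

noncomputable def V0case2 (φ : ℝ) : Matrix (Fin 2) (Fin 2) ℂ :=
  !![(Real.sin (φ / 2) : ℂ), (|Real.cos (φ / 2)| : ℝ);
     -(Real.cos (φ / 2) : ℂ), ((Real.sin φ / (2 * |Real.cos (φ / 2)|) : ℝ) : ℂ)]

noncomputable def V1case2 (φ : ℝ) : Matrix (Fin 2) (Fin 2) ℂ :=
  !![((|Real.cos (φ / 2)| : ℝ) : ℂ), (Real.sin (φ / 2) : ℂ);
     ((Real.sin φ / (2 * |Real.cos (φ / 2)|) : ℝ) : ℂ), -(Real.cos (φ / 2) : ℂ)]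

lemma Matrix.ofReal_fin_two_mem_unitaryGroup {a b c d : ℝ} (hab : a ^ 2 + b ^ 2 = 1)
    (hcd : c ^ 2 + d ^ 2 = 1) (horth : a * c + b * d = 0) :
    !![(a : ℂ), b; c, d] ∈ Matrix.unitaryGroup (Fin 2) ℂ := by
  rw [Matrix.mem_unitaryGroup_iff, Matrix.star_eq_conjTranspose]
  ext i j
  fin_cases i <;> fin_cases j <;>
    simp [Matrix.mul_apply, Fin.sum_univ_two] <;> norm_cast <;> linarith

lemma Matrix.mul_conjTranspose_and_conjTranspose_mul {n : Type*} [Fintype n] [DecidableEq n]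
    {U : Matrix n n ℂ} (hU : U ∈ Matrix.unitaryGroup n ℂ) : U * Uᴴ = 1 ∧ Uᴴ * U = 1 :=
  ⟨Matrix.mem_unitaryGroup_iff.mp hU, Matrix.mem_unitaryGroup_iff'.mp hU⟩

lemma abs_cos_half_mul_sin_div (φ : ℝ) (hc : Real.cos (φ / 2) ≠ 0) :
    |Real.cos (φ / 2)| * (Real.sin φ / (2 * |Real.cos (φ / 2)|)) =
      Real.sin (φ / 2) * Real.cos (φ / 2) := by
  have hsin : Real.sin φ = 2 * Real.sin (φ / 2) * Real.cos (φ / 2) := by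
    rw [← Real.sin_two_mul]; ring_nf
  have : |Real.cos (φ / 2)| ≠ 0 := abs_ne_zero.mpr hc
  rw [hsin]; field_simp

lemma sq_sin_div_two_abs_cos_half (φ : ℝ) (hc : Real.cos (φ / 2) ≠ 0) :
    (Real.sin φ / (2 * |Real.cos (φ / 2)|)) ^ 2 = Real.sin (φ / 2) ^ 2 := by
  have h := congrArg (· ^ 2) (abs_cos_half_mul_sin_div φ hc)
  simp only [mul_pow, sq_abs] at h
  exact mul_left_cancel₀ (pow_ne_zero 2 hc) (by linarith)

theorem stmt9 (φ : ℝ) (hφ : Real.cos (φ / 2) ≠ 0) :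
    (V0case2 φ * (V0case2 φ)ᴴ = 1 ∧ (V0case2 φ)ᴴ * V0case2 φ = 1) ∧
    (V1case2 φ * (V1case2 φ)ᴴ = 1 ∧ (V1case2 φ)ᴴ * V1case2 φ = 1) := by
  have hpyth := Real.sin_sq_add_cos_sq (φ / 2)
  have hsq := sq_sin_div_two_abs_cos_half φ hφ
  have hprod := abs_cos_half_mul_sin_div φ hφ
  have habs := sq_abs (Real.cos (φ / 2))
  have hV0 : V0case2 φ ∈ Matrix.unitaryGroup (Fin 2) ℂ := by
    rw [V0case2, ← Complex.ofReal_neg]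
    exact Matrix.ofReal_fin_two_mem_unitaryGroup (by linear_combination habs + hpyth)
      (by linear_combination hsq + hpyth) (by linear_combination hprod)
  have hV1 : V1case2 φ ∈ Matrix.unitaryGroup (Fin 2) ℂ := by
    rw [V1case2, ← Complex.ofReal_neg]
    exact Matrix.ofReal_fin_two_mem_unitaryGroup (by linear_combination habs + hpyth)
      (by linear_combination hsq + hpyth) (by linear_combination hprod)
  exact ⟨Matrix.mul_conjTranspose_and_conjTranspose_mul hV0,
    Matrix.mul_conjTranspose_and_conjTranspose_mul hV1⟩
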